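/- Suppose ordered tree T is copying T', i.e., T' is obtained from T by appending a new rightmost leaf and then removing some other leaf. If the parent of the rightmost leaf of T' has two or more children then rpl(T) ≥ rpl(T'); otherwise (the parent of the rightmost leaf of T' has exactly one child) rpl(T) = rpl(T') − 1. -/
import Mathlib


/-- An ordered (plane) tree: a root together with the list of subtrees of its
children.  The children are listed **rightmost first** (so the head of the
list is the rightmost child). -/
inductive OTree : Type
  | node : List OTree → OTree

namespace OTree

-- Number of vertices of an ordered tree.
mutual
  def size : OTree → ℕ
    | .node ts => 1 + sizeAux ts
  def sizeAux : List OTree → ℕ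
    | [] => 0
    | t :: ts => size t + sizeAux ts
end

/-- `rpl T` is the number of edges of the rightmost path of `T`
(the path from the root that always follows the rightmost child). -/
def rpl : OTree → ℕ
  | .node [] => 0
  | .node (t :: _) => 1 + rpl t

/-- `p T` removes the rightmost leaf of `T` (the endpoint of the rightmost
path).  On the one-vertex tree it is the identity (junk value). -/
def p : OTree → OTree
  | .node [] => .node []
  | .node (.node [] :: ts) => .node ts
  | .node (.node (c :: cs) :: ts) => .node (p (.node (c :: cs)) :: ts)

/-- `C T i` appends a new leaf as the rightmost child of the vertex at
level `i` on the rightmost path of `T` (the root has level 1).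
Junk values are returned when `i = 0` or `i` exceeds `rpl T + 1`. -/
def C : OTree → ℕ → OTree
  | t, 0 => t
  | .node ts, 1 => .node (.node [] :: ts)
  | .node [], _ + 2 => .node []
  | .node (t :: ts), n + 2 => .node (C t (n + 1) :: ts)

/-- The number of children of the parent of the rightmost leaf
(junk value `0` on the one-vertex tree, which has no such parent). -/
def rmlParentDeg : OTree → ℕ
  | .node [] => 0
  | .node (.node [] :: ts) => ts.length + 1
  | .node (.node (c :: cs) :: _) => rmlParentDeg (.node (c :: cs))

/-- `T` has the pony-tail if the rightmost child of the root has exactly one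
child, which is a leaf. -/
def ponyTail : OTree → Prop
  | .node (.node [.node []] :: _) => True
  | _ => False

end OTree

/-- `AppendLeaf T T'` holds when `T'` is obtained from `T` by attaching one
new leaf to some vertex of `T`, at some position among its children. -/
inductive AppendLeaf : OTree → OTree → Prop
  | root (l r : List OTree) :
      AppendLeaf (.node (l ++ r)) (.node (l ++ OTree.node [] :: r))
  | child (l r : List OTree) (t t' : OTree) :
      AppendLeaf t t' → AppendLeaf (.node (l ++ t :: r)) (.node (l ++ t' :: r))

/-- `DelApp T T'` holds when `T'` can be obtained from `T` by deleting one
leaf and then appending one new leaf somewhere (delete-and-append a leaf). -/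
def DelApp (T T' : OTree) : Prop :=
  ∃ S : OTree, AppendLeaf S T ∧ AppendLeaf S T'

/-- `CopyingAt T T' j` : `T` is copying `T'` at level `j`, i.e. `T'` is
obtained from `T` by appending a new leaf which becomes the rightmost leaf of
`T'` (namely forming `C T j`, whose rightmost path has `j` edges) and then
removing some other leaf. -/
def CopyingAt (T T' : OTree) (j : ℕ) : Prop :=
  T ≠ T' ∧ 1 ≤ j ∧ j ≤ T.rpl + 1 ∧ T'.rpl = j ∧ AppendLeaf T' (T.C j)

/-- `T` is copying `T'`. -/
def Copying (T T' : OTree) : Prop := ∃ j : ℕ, CopyingAt T T' j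


namespace OTree

lemma rpl_nil : rpl (node []) = 0 := rfl
lemma rpl_cons (t : OTree) (ts : List OTree) : rpl (node (t :: ts)) = 1 + rpl t := rfl

lemma eq_nil_of_rpl_eq_zero : ∀ T : OTree, T.rpl = 0 → T = node []
  | node [], _ => rfl
  | node (t :: ts), h => by simp [rpl] at h

lemma rpl_C : ∀ (T : OTree) (j : ℕ), 1 ≤ j → j ≤ T.rpl + 1 → (T.C j).rpl = j
  | node ts, 1, _, _ => by simp [C, rpl]
  | node [], (n+2), _, h2 => by simp [rpl] at h2
  | node (t :: ts), (n+2), _, h2 => by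
      have : (t.C (n+1)).rpl = n + 1 :=
        rpl_C t (n+1) (by omega) (by simp [rpl] at h2; omega)
      simp [C, rpl, this]; omega

lemma p_C : ∀ (T : OTree) (j : ℕ), 1 ≤ j → j ≤ T.rpl + 1 → (T.C j).p = T
  | node ts, 1, _, _ => by simp [C, p]
  | node [], (n+2), _, h2 => by simp [rpl] at h2
  | node (t :: ts), (n+2), _, h2 => by
      have h2' : n + 1 ≤ t.rpl + 1 := by simp [rpl] at h2; omega
      have hr : (t.C (n+1)).rpl = n + 1 := rpl_C t (n+1) (by omega) h2'
      obtain ⟨c, cs, hc⟩ : ∃ c cs, t.C (n+1) = node (c :: cs) := by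
        rcases hCt : t.C (n+1) with ⟨ts'⟩
        cases ts' with
        | nil => rw [hCt] at hr; simp [rpl] at hr
        | cons c cs => exact ⟨c, cs, rfl⟩
      have ih : (t.C (n+1)).p = t := p_C t (n+1) (by omega) h2'
      show (node (t.C (n+1) :: ts)).p = node (t :: ts)
      rw [hc]
      show node ((node (c :: cs)).p :: ts) = node (t :: ts)
      rw [← hc, ih]

lemma deg_C_eq_one : ∀ (T : OTree), (T.C (T.rpl + 1)).rmlParentDeg = 1
  | node [] => by simp [rpl, C, rmlParentDeg]
  | node (t :: ts) => by
      have ih := deg_C_eq_one t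
      show ((node (t :: ts)).C (1 + t.rpl + 1)).rmlParentDeg = 1
      have : 1 + t.rpl + 1 = t.rpl + 2 := by omega
      rw [this]
      show (node (t.C (t.rpl + 1) :: ts)).rmlParentDeg = 1
      have hr : (t.C (t.rpl+1)).rpl = t.rpl + 1 := rpl_C t _ (by omega) (by omega)
      obtain ⟨c, cs, hc⟩ : ∃ c cs, t.C (t.rpl+1) = node (c :: cs) := by
        rcases hCt : t.C (t.rpl+1) with ⟨ts'⟩
        cases ts' with
        | nil => rw [hCt] at hr; simp [rpl] at hr
        | cons c cs => exact ⟨c, cs, rfl⟩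
      rw [hc]
      show (node (c :: cs)).rmlParentDeg = 1
      rw [← hc]; exact ih

lemma deg_C_ge_two : ∀ (T : OTree) (j : ℕ), 1 ≤ j → j ≤ T.rpl → 2 ≤ (T.C j).rmlParentDeg
  | node [], j, h1, h2 => by simp [rpl] at h2; omega
  | node (t :: ts), 1, _, _ => by
      show 2 ≤ (node (node [] :: t :: ts)).rmlParentDeg
      simp [rmlParentDeg]
  | node (t :: ts), (n+2), _, h2 => by
      have h2' : n + 1 ≤ t.rpl := by simp [rpl] at h2; omega
      have ih := deg_C_ge_two t (n+1) (by omega) h2'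
      show 2 ≤ (node (t.C (n+1) :: ts)).rmlParentDeg
      have hr : (t.C (n+1)).rpl = n + 1 := rpl_C t _ (by omega) (by omega)
      obtain ⟨c, cs, hc⟩ : ∃ c cs, t.C (n+1) = node (c :: cs) := by
        rcases hCt : t.C (n+1) with ⟨ts'⟩
        cases ts' with
        | nil => rw [hCt] at hr; simp [rpl] at hr
        | cons c cs => exact ⟨c, cs, rfl⟩
      rw [hc]
      show 2 ≤ (node (c :: cs)).rmlParentDeg
      rw [← hc]; exact ih

lemma deg_pos : ∀ (t : OTree) (ts : List OTree), 1 ≤ (node (t :: ts)).rmlParentDeg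
  | node [], ts => by simp [rmlParentDeg]
  | node (c :: cs), ts => by
      show 1 ≤ (node (c :: cs)).rmlParentDeg
      exact deg_pos c cs


lemma appendLeaf_rpl_pos {S U : OTree} (h : AppendLeaf S U) : 1 ≤ U.rpl := by
  cases h with
  | root l r => cases l <;> simp [rpl]
  | child l r t t' h => cases l <;> simp [rpl]

lemma key {S U : OTree} (h : AppendLeaf S U) (hrpl : U.rpl = S.rpl) :
    U.rmlParentDeg = S.rmlParentDeg ∨
      (U.rmlParentDeg = S.rmlParentDeg + 1 ∧ (3 ≤ U.rmlParentDeg ∨ U.p = S)) := by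
  induction h with
  | root l r =>
    cases l with
    | nil =>
      -- S = node r, U = node (node [] :: r), rpl U = 1 so r = node [] :: r'
      simp only [List.nil_append] at hrpl ⊢
      have h1 : (node (OTree.node [] :: r)).rpl = 1 := by simp [rpl]
      rw [h1] at hrpl
      obtain ⟨x, r', rfl⟩ : ∃ x r', r = x :: r' := by
        cases r with
        | nil => simp [rpl] at hrpl
        | cons x r' => exact ⟨x, r', rfl⟩
      have hx : x = node [] := by
        apply eq_nil_of_rpl_eq_zero
        simp [rpl] at hrpl; omega
      subst hx
      right
      refine ⟨?_, Or.inr ?_⟩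
      · show ((node [] :: r').length + 1) = (r'.length + 1) + 1
        simp
      · show node (OTree.node [] :: r') = node (OTree.node [] :: r')
        rfl
    | cons x l' =>
      rcases x with ⟨cs⟩
      cases cs with
      | nil =>
        -- head is a leaf: deg counts list lengths
        have hU : (node ((node [] :: l') ++ OTree.node [] :: r)).rmlParentDeg
            = (l' ++ OTree.node [] :: r).length + 1 := rfl
        have hS : (node ((node [] :: l') ++ r)).rmlParentDeg = (l' ++ r).length + 1 := rfl
        right
        constructor
        · rw [hU, hS]; simp; omega
        · cases l' with
          | nil =>
            right
            rfl
          | cons y l'' =>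
            left
            rw [hU]; simp; omega
      | cons c cs' =>
        left
        have hU : (node ((node (c :: cs') :: l') ++ OTree.node [] :: r)).rmlParentDeg
            = (node (c :: cs')).rmlParentDeg := rfl
        have hS : (node ((node (c :: cs') :: l') ++ r)).rmlParentDeg
            = (node (c :: cs')).rmlParentDeg := rfl
        rw [hU, hS]
  | child l r t t' h ih =>
    cases l with
    | nil =>
      simp only [List.nil_append] at hrpl ⊢
      have hrt : t'.rpl = t.rpl := by
        have h1 : (node (t' :: r)).rpl = 1 + t'.rpl := rfl
        have h2 : (node (t :: r)).rpl = 1 + t.rpl := rfl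
        rw [h1, h2] at hrpl; omega
      have hpos : 1 ≤ t'.rpl := appendLeaf_rpl_pos h
      obtain ⟨c, cs, rfl⟩ : ∃ c cs, t = node (c :: cs) := by
        rcases t with ⟨ts⟩
        cases ts with
        | nil => rw [show (node ([] : List OTree)).rpl = 0 from rfl] at hrt; omega
        | cons c cs => exact ⟨c, cs, rfl⟩
      obtain ⟨c', cs', rfl⟩ : ∃ c' cs', t' = node (c' :: cs') := by
        rcases t' with ⟨ts⟩
        cases ts with
        | nil => simp [rpl] at hpos
        | cons c' cs' => exact ⟨c', cs', rfl⟩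
      have hU : (node (node (c' :: cs') :: r)).rmlParentDeg
          = (node (c' :: cs')).rmlParentDeg := rfl
      have hS : (node (node (c :: cs) :: r)).rmlParentDeg
          = (node (c :: cs)).rmlParentDeg := rfl
      rcases ih hrt with h1 | ⟨h1, h2⟩
      · left; rw [hU, hS, h1]
      · right
        refine ⟨by rw [hU, hS, h1], ?_⟩
        rcases h2 with h2 | h2
        · left; rw [hU]; exact h2
        · right
          show node ((node (c' :: cs')).p :: r) = node (node (c :: cs) :: r)
          rw [h2]
    | cons x l' =>
      rcases x with ⟨cs⟩
      cases cs with
      | nil =>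
        left
        have hU : (node ((node [] :: l') ++ t' :: r)).rmlParentDeg
            = (l' ++ t' :: r).length + 1 := rfl
        have hS : (node ((node [] :: l') ++ t :: r)).rmlParentDeg
            = (l' ++ t :: r).length + 1 := rfl
        rw [hU, hS]; simp
      | cons c cs' =>
        left
        rfl


end OTree

/-- Suppose `T` is copying `T'`.  If the parent of the rightmost leaf of `T'`
has two or more children then `rpl T ≥ rpl T'`; otherwise (it has exactly one
child) `rpl T = rpl T' - 1`. -/
theorem stmt_8 (T T' : OTree) (h : Copying T T') :
    (2 ≤ T'.rmlParentDeg → T'.rpl ≤ T.rpl) ∧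
    (T'.rmlParentDeg = 1 → T.rpl + 1 = T'.rpl) := by
  obtain ⟨j, hne, hj1, hj2, hrT', hApp⟩ := h
  have hrU : (T.C j).rpl = j := OTree.rpl_C T j hj1 hj2
  have hrr : (T.C j).rpl = T'.rpl := by rw [hrU, hrT']
  have hk := OTree.key hApp hrr
  constructor
  · intro hdeg
    rw [hrT']
    by_contra hc
    have hj : j = T.rpl + 1 := by omega
    have h1 : (T.C j).rmlParentDeg = 1 := by rw [hj]; exact OTree.deg_C_eq_one T
    rcases hk with h | ⟨h, _⟩ <;> omega
  · intro hdeg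
    rw [hrT']
    by_contra hc
    have hjle : j ≤ T.rpl := by omega
    have h2 : 2 ≤ (T.C j).rmlParentDeg := OTree.deg_C_ge_two T j hj1 hjle
    rcases hk with h | ⟨h, h3⟩
    · omega
    · rcases h3 with h3 | h3
      · omega
      · exact hne ((OTree.p_C T j hj1 hj2).symm.trans h3)
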